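/- arXiv:2105.04501 — 2 statements merged into one kernel-verified Lean document; each statement's English description precedes it below -/
import Mathlib

section
/- Soundness of the Iter unrolling rule: if ⊨ [fun G => c G ∧ App(step) G] (step ; step!) [fun H => d H ∧ ¬App(step) H] then ⊨ [fun G => c G ∧ App(step) G] step! [fun H => d H ∧ ¬App(step) H], where (step ; step!) is the relational composition of step with the iteration relation. -/
def Valid {S : Type*} (c : S → Prop) (R : S → S → Prop) (d : S → Prop) : Prop :=
  ∀ H, d H → ∃ G, c G ∧ R G H

def App {S : Type*} (step : S → S → Prop) (G : S) : Prop := ∃ H, step G H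

def IterRel {S : Type*} (step : S → S → Prop) (G H : S) : Prop :=
  (∃ n, ∃ f : Fin (n + 1) → S, f 0 = G ∧ f (Fin.last n) = H ∧
    (∀ i : Fin n, step (f i.castSucc) (f i.succ))) ∧ ¬ App step H

theorem iter_unroll_sound {S : Type*} (step : S → S → Prop) (c d : S → Prop)
    (h : Valid (fun G => c G ∧ App step G)
      (fun G H => ∃ G', step G G' ∧ IterRel step G' H)
      (fun H => d H ∧ ¬ App step H)) :
    Valid (fun G => c G ∧ App step G) (IterRel step)
      (fun H => d H ∧ ¬ App step H) := by
  intro H hd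
  obtain ⟨G, hG, G', hstep, ⟨⟨n, f, hf0, hflast, hchain⟩, hna⟩⟩ := h H hd
  refine ⟨G, hG, ⟨⟨n + 1, Fin.cons G f, Fin.cons_zero _ _, ?_, ?_⟩, hna⟩⟩
  · rw [show (Fin.last (n + 1)) = (Fin.last n).succ from rfl, Fin.cons_succ]
    exact hflast
  · intro i
    induction i using Fin.cases with
    | zero =>
      rw [Fin.castSucc_zero, Fin.cons_zero, Fin.cons_succ, hf0]; exact hstep
    | succ j =>
      rw [Fin.castSucc_fin_succ]
      simpa [Fin.cons_succ] using hchain j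
end

section
/- Soundness of the IterVar (backwards variant) rule: given predicates c₀, …, cₙ on States such that ⊨ [c_{i-1}] step [c_i] for all 0 < i ≤ n, and cₙ implies ¬App(step), then ⊨ [c₀] step! [cₙ]. -/
lemma chain_exists {S : Type*} (step : S → S → Prop) :
    ∀ (n : ℕ) (c : Fin (n + 1) → (S → Prop)),
    (∀ i : Fin n, Valid (c i.castSucc) step (c i.succ)) →
    ∀ H, c (Fin.last n) H →
    ∃ f : Fin (n + 1) → S, c 0 (f 0) ∧ f (Fin.last n) = H ∧
      (∀ i : Fin n, step (f i.castSucc) (f i.succ)) := by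
  intro n
  induction n with
  | zero =>
    intro c _ H hH
    exact ⟨fun _ => H, hH, rfl, fun i => i.elim0⟩
  | succ m ih =>
    intro c hstep H hH
    obtain ⟨G', hG', hstepG'⟩ := hstep (Fin.last m) H hH
    obtain ⟨f, hf0, hflast, hfstep⟩ := ih (fun j => c j.castSucc)
      (fun i => by
        have := hstep i.castSucc
        rwa [Fin.succ_castSucc] at this) G' hG'
    refine ⟨Fin.snoc f H, ?_, ?_, ?_⟩
    · have : (0 : Fin (m + 2)) = (0 : Fin (m + 1)).castSucc := rfl
      rw [this, Fin.snoc_castSucc]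
      exact hf0
    · simp
    · intro i
      refine Fin.lastCases ?_ ?_ i
      · rw [Fin.succ_last, Fin.snoc_castSucc, Fin.snoc_last, hflast]
        exact hstepG'
      · intro j
        rw [Fin.succ_castSucc, Fin.snoc_castSucc, Fin.snoc_castSucc]
        exact hfstep j

theorem iterVar_sound {S : Type*} (step : S → S → Prop) (n : ℕ)
    (c : Fin (n + 1) → (S → Prop))
    (hstep : ∀ i : Fin n, Valid (c i.castSucc) step (c i.succ))
    (hlast : ∀ H, c (Fin.last n) H → ¬ App step H) :
    Valid (c 0) (IterRel step) (c (Fin.last n)) := by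
  intro H hH
  obtain ⟨f, hf0, hflast, hfstep⟩ := chain_exists step n c hstep H hH
  exact ⟨f 0, hf0, ⟨⟨n, f, rfl, hflast, hfstep⟩, hlast H hH⟩⟩
end
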